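/- (Lemma 3, penalized case pruning with margin β.) For m < n, suppose the changepoint vector τ satisfies L_m(z, τ) − β > L^opt_m(z) for all z ∈ R. Then L^opt_n(z) < L_n(z, τ) for all z ∈ R, i.e., τ is never an optimizer of the penalized loss on the length-n problem. -/

import Mathlib

/-- Segment mean of entries `s` through `e` of the sequence `x`. -/
noncomputable def segMean (x : ℕ → ℝ) (s e : ℕ) : ℝ :=
  (∑ i ∈ Finset.Icc s e, x i) / ((e - s + 1 : ℕ) : ℝ)

/-- Segment cost `C(x_{s:e}) = ∑_{i=s}^e (x_i - x̄_{s:e})²`. -/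
noncomputable def segCost (x : ℕ → ℝ) (s e : ℕ) : ℝ :=
  ∑ i ∈ Finset.Icc s e, (x i - segMean x s e) ^ 2

/-- The parametrized sequence `x(z) = a + b z`. -/
def paramSeq (a b : ℕ → ℝ) (z : ℝ) : ℕ → ℝ := fun i => a i + b i * z

/-- The segment boundaries `0 = τ₀ < τ₁ < ... < τ_k < τ_{k+1} = n` associated with a
changepoint vector `τ = (τ₁, ..., τ_k)`. -/
def bounds (n : ℕ) {k : ℕ} (τ : Fin k → ℕ) : Fin (k + 2) → ℕ :=
  Fin.snoc (Fin.cons 0 τ) n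

/-- `τ` is a valid `k`-dimensional changepoint vector for a length-`n` sequence:
strictly increasing with `1 ≤ τ_i ≤ n - 1`. -/
def validCP (n : ℕ) {k : ℕ} (τ : Fin k → ℕ) : Prop :=
  StrictMono τ ∧ ∀ i, 1 ≤ τ i ∧ τ i < n

/-- The segmentation loss `L_{k,n}(x, τ) = ∑_{κ=1}^{k+1} C(x_{τ_{κ-1}+1 : τ_κ})`. -/
noncomputable def cpLoss (x : ℕ → ℝ) (n : ℕ) {k : ℕ} (τ : Fin k → ℕ) : ℝ :=
  ∑ κ : Fin (k + 1), segCost x (bounds n τ κ.castSucc + 1) (bounds n τ κ.succ)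

/-- The optimal loss `L^opt_{k,n}(x) = min_{τ ∈ T_{k,n}} L_{k,n}(x, τ)`. -/
noncomputable def optLoss (x : ℕ → ℝ) (k n : ℕ) : ℝ :=
  sInf {r : ℝ | ∃ τ : Fin k → ℕ, validCP n τ ∧ r = cpLoss x n τ}

/-- The penalized loss `L_n(x, τ) = ∑_κ C(x_{τ_{κ-1}+1:τ_κ}) + β·dim(τ)`. -/
noncomputable def penLoss (x : ℕ → ℝ) (β : ℝ) (n : ℕ) {k : ℕ} (τ : Fin k → ℕ) : ℝ :=
  cpLoss x n τ + β * k

/-- The penalized optimal loss `L^opt_n(x) = min_{τ ∈ T_n} L_n(x, τ)` over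
changepoint vectors of any dimension. -/
noncomputable def optPenLoss (x : ℕ → ℝ) (β : ℝ) (n : ℕ) : ℝ :=
  sInf {r : ℝ | ∃ (k : ℕ) (τ : Fin k → ℕ), validCP n τ ∧ r = penLoss x β n τ}

/-! The pruning argument: take a near-optimal segmentation `σ` of `x_{1:m}` and append the
changepoint `m`. Its length-`n` penalized loss is `L_m(σ) + C(x_{m+1:n}) + β`, which the hypothesis
pushes below `L_m(τ) + C(x_{m+1:n})`; and since splitting a segment never increases its cost, that
is at most `L_n(τ)`. The degenerate case `m = 0` is ruled out by the margin `β > 0`. -/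

open Finset

theorem Finset.sum_sq_sub_mean_le {ι : Type*} (S : Finset ι) (f : ι → ℝ) (c : ℝ) :
    ∑ i ∈ S, (f i - (∑ j ∈ S, f j) / #S) ^ 2 ≤ ∑ i ∈ S, (f i - c) ^ 2 := by
  set μ := (∑ j ∈ S, f j) / #S
  have hsum : ∑ i ∈ S, f i = #S * μ := by
    rcases S.eq_empty_or_nonempty with rfl | hS
    · simp
    · rw [mul_div_cancel₀ _ (Nat.cast_ne_zero.2 hS.card_pos.ne')]
  have hexpand : ∑ i ∈ S, (f i - c) ^ 2 = ∑ i ∈ S, (f i - μ) ^ 2 + #S * (μ - c) ^ 2 := by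
    have hsq : ∀ i, (f i - c) ^ 2 = (f i - μ) ^ 2 + (2 * (μ - c) * f i - 2 * (μ - c) * μ)
        + (μ - c) ^ 2 := fun i => by ring
    simp only [hsq, sum_add_distrib, sum_sub_distrib, ← mul_sum, sum_const, nsmul_eq_mul, hsum]
    ring
  rw [hexpand]
  nlinarith [sq_nonneg (μ - c), (#S).cast_nonneg (α := ℝ)]

lemma segCost_le_sum_sq (x : ℕ → ℝ) (s e : ℕ) (c : ℝ) :
    segCost x s e ≤ ∑ i ∈ Icc s e, (x i - c) ^ 2 := by
  rcases le_or_gt s e with hse | hes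
  · have hmean : segMean x s e = (∑ i ∈ Icc s e, x i) / #(Icc s e) := by
      rw [segMean, Nat.card_Icc, Nat.sub_add_comm hse]
    rw [segCost, hmean]
    exact sum_sq_sub_mean_le _ _ _
  · simp [segCost, Icc_eq_empty_of_lt hes]

lemma segCost_add_segCost_le (x : ℕ → ℝ) {s m e : ℕ} (hsm : s ≤ m) (hme : m ≤ e) :
    segCost x (s + 1) m + segCost x (m + 1) e ≤ segCost x (s + 1) e := by
  set μ := segMean x (s + 1) e
  calc segCost x (s + 1) m + segCost x (m + 1) e
      ≤ ∑ i ∈ Ioc s m, (x i - μ) ^ 2 + ∑ i ∈ Ioc m e, (x i - μ) ^ 2 := by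
        rw [← Icc_add_one_left_eq_Ioc, ← Icc_add_one_left_eq_Ioc]
        exact add_le_add (segCost_le_sum_sq x _ _ μ) (segCost_le_sum_sq x _ _ μ)
    _ = segCost x (s + 1) e := by
        rw [sum_Ioc_consecutive _ hsm hme, segCost, Icc_add_one_left_eq_Ioc]

lemma segCost_nonneg (x : ℕ → ℝ) (s e : ℕ) : 0 ≤ segCost x s e :=
  sum_nonneg fun _ _ => sq_nonneg _

lemma cpLoss_nonneg (x : ℕ → ℝ) (n : ℕ) {k : ℕ} (τ : Fin k → ℕ) : 0 ≤ cpLoss x n τ :=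
  sum_nonneg fun _ _ => segCost_nonneg _ _ _

lemma penLoss_nonneg (x : ℕ → ℝ) {β : ℝ} (hβ : 0 ≤ β) (n : ℕ) {k : ℕ} (τ : Fin k → ℕ) :
    0 ≤ penLoss x β n τ :=
  add_nonneg (cpLoss_nonneg x n τ) (by positivity)

lemma cpLoss_eq_sum_add_segCost_last (x : ℕ → ℝ) (n : ℕ) {k : ℕ} (τ : Fin k → ℕ) :
    cpLoss x n τ
      = ∑ j : Fin k, segCost x ((Fin.cons 0 τ : Fin (k + 1) → ℕ) j.castSucc + 1)
          ((Fin.cons 0 τ : Fin (k + 1) → ℕ) j.succ)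
        + segCost x ((Fin.cons 0 τ : Fin (k + 1) → ℕ) (Fin.last k) + 1) n := by
  rw [cpLoss, Fin.sum_univ_castSucc]
  simp only [bounds, Fin.succ_castSucc, Fin.snoc_castSucc, Fin.succ_last, Fin.snoc_last]

lemma cpLoss_snoc (x : ℕ → ℝ) (m n : ℕ) {k : ℕ} (τ : Fin k → ℕ) :
    cpLoss x n (Fin.snoc τ m) = cpLoss x m τ + segCost x (m + 1) n := by
  rw [cpLoss_eq_sum_add_segCost_last, Fin.cons_snoc_eq_snoc_cons, Fin.snoc_last]
  rfl

lemma penLoss_snoc (x : ℕ → ℝ) (β : ℝ) (m n : ℕ) {k : ℕ} (τ : Fin k → ℕ) :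
    penLoss x β n (Fin.snoc τ m) = penLoss x β m τ + segCost x (m + 1) n + β := by
  simp only [penLoss, cpLoss_snoc]
  push_cast
  ring

lemma validCP_elim0 (n : ℕ) : validCP n (Fin.elim0 : Fin 0 → ℕ) :=
  ⟨fun i => i.elim0, fun i => i.elim0⟩

lemma validCP.dim_eq_zero {k : ℕ} {τ : Fin k → ℕ} (hτ : validCP 0 τ) : k = 0 := by
  by_contra hk
  exact Nat.not_lt_zero _ (hτ.2 ⟨0, Nat.pos_of_ne_zero hk⟩).2

lemma validCP.snoc {m n k : ℕ} {τ : Fin k → ℕ} (hτ : validCP m τ) (hm : 0 < m) (hmn : m < n) :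
    validCP n (Fin.snoc τ m) := by
  refine ⟨?_, fun i => ?_⟩
  · rw [← Fin.insertNth_last', Fin.strictMono_insertNth_iff]
    exact ⟨hτ.1, fun i _ => (hτ.2 i).2, fun i hi => absurd hi (Fin.castSucc_lt_last i).not_ge⟩
  · induction i using Fin.lastCases with
    | last => simpa using ⟨hm, hmn⟩
    | cast i => simpa using ⟨(hτ.2 i).1, (hτ.2 i).2.trans hmn⟩

lemma validCP.cons_last_le {m k : ℕ} {τ : Fin k → ℕ} (hτ : validCP m τ) :
    (Fin.cons 0 τ : Fin (k + 1) → ℕ) (Fin.last k) ≤ m := by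
  cases k with
  | zero => exact Nat.zero_le m
  | succ j =>
    rw [← Fin.succ_last, Fin.cons_succ]
    exact (hτ.2 _).2.le

lemma cpLoss_add_segCost_le {x : ℕ → ℝ} {m n k : ℕ} {τ : Fin k → ℕ} (hτ : validCP m τ)
    (hmn : m ≤ n) : cpLoss x m τ + segCost x (m + 1) n ≤ cpLoss x n τ := by
  rw [cpLoss_eq_sum_add_segCost_last x m, cpLoss_eq_sum_add_segCost_last x n]
  linarith [segCost_add_segCost_le x hτ.cons_last_le hmn]

lemma penLoss_add_segCost_le {x : ℕ → ℝ} (β : ℝ) {m n k : ℕ} {τ : Fin k → ℕ}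
    (hτ : validCP m τ) (hmn : m ≤ n) :
    penLoss x β m τ + segCost x (m + 1) n ≤ penLoss x β n τ := by
  simp only [penLoss]
  linarith [cpLoss_add_segCost_le (x := x) hτ hmn]

lemma optPenLoss_nonneg (x : ℕ → ℝ) {β : ℝ} (hβ : 0 ≤ β) (n : ℕ) : 0 ≤ optPenLoss x β n :=
  Real.sInf_nonneg fun _ ⟨_, τ, _, hr⟩ => hr ▸ penLoss_nonneg x hβ n τ

lemma optPenLoss_le {x : ℕ → ℝ} {β : ℝ} (hβ : 0 ≤ β) {n k : ℕ} {τ : Fin k → ℕ}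
    (hτ : validCP n τ) : optPenLoss x β n ≤ penLoss x β n τ :=
  csInf_le ⟨0, fun _ ⟨_, σ, _, hr⟩ => hr ▸ penLoss_nonneg x hβ n σ⟩ ⟨k, τ, hτ, rfl⟩

lemma optPenLoss_le_add_segCost (x : ℕ → ℝ) {β : ℝ} (hβ : 0 ≤ β) {m n : ℕ} (hm : 0 < m)
    (hmn : m < n) : optPenLoss x β n ≤ optPenLoss x β m + segCost x (m + 1) n + β := by
  have : optPenLoss x β n - segCost x (m + 1) n - β ≤ optPenLoss x β m := by
    refine le_csInf ⟨_, 0, Fin.elim0, validCP_elim0 m, rfl⟩ ?_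
    rintro _ ⟨k, σ, hσ, rfl⟩
    linarith [optPenLoss_le (x := x) hβ (hσ.snoc hm hmn), penLoss_snoc x β m n σ]
  linarith

lemma penLoss_of_validCP_zero (x : ℕ → ℝ) (β : ℝ) {k : ℕ} {τ : Fin k → ℕ}
    (hτ : validCP 0 τ) : penLoss x β 0 τ = 0 := by
  obtain rfl := hτ.dim_eq_zero
  simp [penLoss, cpLoss_eq_sum_add_segCost_last, segCost]

theorem optPenLoss_lt_penLoss_of_margin {x : ℕ → ℝ} {β : ℝ} (hβ : 0 < β) {k m n : ℕ}
    {τ : Fin k → ℕ} (hmn : m < n) (hτ : validCP m τ)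
    (hsub : optPenLoss x β m < penLoss x β m τ - β) :
    optPenLoss x β n < penLoss x β n τ := by
  rcases Nat.eq_zero_or_pos m with rfl | hm
  · rw [penLoss_of_validCP_zero x β hτ] at hsub
    linarith [optPenLoss_nonneg x hβ.le 0]
  · calc optPenLoss x β n ≤ optPenLoss x β m + segCost x (m + 1) n + β :=
          optPenLoss_le_add_segCost x hβ.le hm hmn
      _ < penLoss x β m τ + segCost x (m + 1) n := by linarith
      _ ≤ penLoss x β n τ := penLoss_add_segCost_le β hτ hmn.le

/-- Lemma 3 (penalized case, pruning with margin `β`): for `m < n`, if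
`L_m(z, τ) − β > L^opt_m(z)` for all `z`, then `L^opt_n(z) < L_n(z, τ)` for all `z`,
i.e. `τ` is never an optimizer of the penalized loss on the length-`n` problem. -/
theorem pen_prune_margin (a b : ℕ → ℝ) (β : ℝ) (hβ : 0 < β) (k m n : ℕ)
    (τ : Fin k → ℕ) (hmn : m < n) (hτ : validCP m τ)
    (hsub : ∀ z : ℝ,
      optPenLoss (paramSeq a b z) β m < penLoss (paramSeq a b z) β m τ - β) :
    ∀ z : ℝ, optPenLoss (paramSeq a b z) β n < penLoss (paramSeq a b z) β n τ :=
  fun z => optPenLoss_lt_penLoss_of_margin hβ hmn hτ (hsub z)
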